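/- Two nonempty strings x, y over Z_q have a common descendant under palindromic (equivalently tandem) duplications of length 1 if and only if they have the same run-length signature, i.e., the same sequence of letters obtained by collapsing maximal runs of equal letters. -/

import Mathlib

/-- One palindromic duplication of length `k`: a `k`-factor `v` of `x`
gets a reversed copy inserted right after it. -/
def PalStep {q : ℕ} (k : ℕ) (x y : List (ZMod q)) : Prop :=
  ∃ u v w : List (ZMod q), v.length = k ∧ x = u ++ v ++ w ∧
    y = u ++ v ++ v.reverse ++ w

/-- Finitely many (possibly zero) palindromic duplications of length `k`. -/
def PalDerives {q : ℕ} (k : ℕ) : List (ZMod q) → List (ZMod q) → Prop :=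
  Relation.ReflTransGen (PalStep k)

/-!
Duplicating a single letter only lengthens one of the maximal runs, so the run-length signature
is invariant and strings with a common descendant have the same signature. Conversely, for every
`N ≥ |x|` the string `x` derives the string obtained from its signature by giving every run
length exactly `N`; two strings with the same signature therefore both derive that string for
`N = max |x| |y|`.
-/

namespace List

variable {α : Type*} {R : α → α → Prop} [DecidableRel R]

theorem destutter'_append_cons_cons {a : α} (ha : ¬R a a) :
    ∀ (u : List α) (b : α) (w : List α),
      (u ++ a :: a :: w).destutter' R b = (u ++ a :: w).destutter' R b
  | [], b, w => by
    by_cases hba : R b a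
    · simp only [nil_append, destutter'_cons_pos _ hba, destutter'_cons_neg _ ha]
    · simp only [nil_append, destutter'_cons_neg _ hba]
  | c :: u, b, w => by
    simp only [cons_append, destutter'_cons]
    split_ifs <;> rw [destutter'_append_cons_cons ha]

theorem destutter_append_cons_cons {a : α} (ha : ¬R a a) (u w : List α) :
    (u ++ a :: a :: w).destutter R = (u ++ a :: w).destutter R := by
  cases u with
  | nil => simp only [nil_append, destutter_cons', destutter'_cons_neg _ ha]
  | cons c u =>
    simp only [cons_append, destutter_cons', destutter'_append_cons_cons ha]

end List

variable {q : ℕ}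

theorem PalStep.destutter_eq {x y : List (ZMod q)} (h : PalStep 1 x y) :
    x.destutter (· ≠ ·) = y.destutter (· ≠ ·) := by
  obtain ⟨u, v, w, hv, rfl, rfl⟩ := h
  obtain ⟨a, rfl⟩ := List.length_eq_one_iff.mp hv
  simpa using (List.destutter_append_cons_cons (R := (· ≠ ·)) (not_not.mpr rfl) u w).symm

theorem PalDerives.destutter_eq {x y : List (ZMod q)} (h : PalDerives 1 x y) :
    x.destutter (· ≠ ·) = y.destutter (· ≠ ·) := by
  induction h with
  | refl => rfl
  | tail _ hstep ih => exact ih.trans hstep.destutter_eq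

theorem PalStep.append_left {k : ℕ} (p : List (ZMod q)) {x y : List (ZMod q)}
    (h : PalStep k x y) : PalStep k (p ++ x) (p ++ y) := by
  obtain ⟨u, v, w, hv, rfl, rfl⟩ := h
  exact ⟨p ++ u, v, w, hv, by simp, by simp⟩

theorem PalStep.append_right {k : ℕ} (s : List (ZMod q)) {x y : List (ZMod q)}
    (h : PalStep k x y) : PalStep k (x ++ s) (y ++ s) := by
  obtain ⟨u, v, w, hv, rfl, rfl⟩ := h
  exact ⟨u, v, w ++ s, hv, by simp, by simp⟩

theorem PalDerives.append {k : ℕ} {x x' y y' : List (ZMod q)}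
    (hx : PalDerives k x x') (hy : PalDerives k y y') : PalDerives k (x ++ y) (x' ++ y') :=
  (hx.lift (· ++ y) fun _ _ h => h.append_right y).trans
    (hy.lift (x' ++ ·) fun _ _ h => h.append_left x')

theorem palDerives_replicate (a : ZMod q) {k N : ℕ} (hk : 1 ≤ k) (hkN : k ≤ N) :
    PalDerives 1 (List.replicate k a) (List.replicate N a) := by
  induction N, hkN using Nat.le_induction with
  | base => exact .refl
  | succ n hn ih =>
    obtain ⟨m, rfl⟩ : ∃ m, n = m + 1 := ⟨n - 1, by omega⟩
    refine ih.tail ⟨[], [a], List.replicate m a, rfl, ?_, ?_⟩ <;>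
      simp [List.replicate_succ]

theorem palDerives_replicate_append_flatMap_destutter :
    ∀ (l : List (ZMod q)) (a : ZMod q) {k N : ℕ}, 1 ≤ k → k + l.length ≤ N →
      PalDerives 1 (List.replicate k a ++ l)
        (((a :: l).destutter (· ≠ ·)).flatMap (List.replicate N))
  | [], a, _, _, hk, hkN => by
    simpa using palDerives_replicate a hk (by simpa using hkN)
  | b :: l, a, k, N, hk, hkN => by
    simp only [List.length_cons] at hkN
    rw [List.destutter_cons_cons]
    split_ifs with hab
    · have hrest := palDerives_replicate_append_flatMap_destutter l b le_rfl (N := N) (by omega)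
      rw [List.replicate_one, List.singleton_append] at hrest
      rw [List.flatMap_cons, ← List.destutter_cons']
      exact (palDerives_replicate a hk (by omega)).append hrest
    · obtain rfl : a = b := not_not.mp hab
      have h := palDerives_replicate_append_flatMap_destutter l a (k := k + 1) (N := N)
        (by omega) (by omega)
      rwa [List.replicate_succ', List.append_assoc] at h

theorem palDerives_flatMap_replicate_destutter {N : ℕ} :
    ∀ x : List (ZMod q), x.length ≤ N →
      PalDerives 1 x ((x.destutter (· ≠ ·)).flatMap (List.replicate N))
  | [], _ => .refl
  | a :: l, hN => by
    simpa using
      palDerives_replicate_append_flatMap_destutter l a le_rfl (by simpa [add_comm] using hN)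

theorem stmt15_general {q : ℕ} (x y : List (ZMod q)) :
    (∃ z, PalDerives 1 x z ∧ PalDerives 1 y z) ↔
      x.destutter (· ≠ ·) = y.destutter (· ≠ ·) := by
  constructor
  · rintro ⟨z, hxz, hyz⟩
    rw [hxz.destutter_eq, hyz.destutter_eq]
  · intro h
    refine ⟨(x.destutter (· ≠ ·)).flatMap (List.replicate (max x.length y.length)),
      palDerives_flatMap_replicate_destutter x (le_max_left _ _), ?_⟩
    rw [h]
    exact palDerives_flatMap_replicate_destutter y (le_max_right _ _)

/-- Two nonempty `q`-ary strings have a common descendant under length-1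
palindromic (equivalently tandem) duplications iff they have the same
run-length signature (collapsing maximal runs of equal letters). -/
theorem stmt15 {q : ℕ} (x y : List (ZMod q)) (hx : x ≠ []) (hy : y ≠ []) :
    (∃ z, PalDerives 1 x z ∧ PalDerives 1 y z) ↔
      x.destutter (· ≠ ·) = y.destutter (· ≠ ·) :=
  stmt15_general x y
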